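/- arXiv:2508.14619 — 5 statements merged into one kernel-verified Lean document; each statement's English description precedes it below -/
import Mathlib

section
/- (Galvin's theorem, as proved in the paper.) Let κ be an uncountable regular cardinal such that 2^μ ≤ κ for every cardinal μ < κ, and let U be a proper filter on the set of ordinals below κ that is normal, i.e. closed under diagonal intersections. Then Gal(κ,U,κ⁺) holds: for every family ⟨X_α : α < κ⁺⟩ of members of U there is a set I ⊆ κ⁺ of cardinality κ such that ⋂_{α ∈ I} X_α ∈ U. -/
universe u v

open Cardinal

/-- `Gal U κ λ`: for every family of `λ` many members of `U` there is a
subfamily of size `κ` whose intersection is in `U`. -/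
def Gal {X : Type u} (U : Filter X) (kappa lam : Cardinal.{v}) : Prop :=
  ∀ A : lam.ord.ToType → Set X, (∀ i, A i ∈ U) →
    ∃ I : Set lam.ord.ToType, #I = kappa ∧ (⋂ i ∈ I, A i) ∈ U

/-- A filter on the set of ordinals below `κ` (represented by the type `κ.ord.ToType`)
is normal iff it is closed under diagonal intersections. -/
def IsNormalFilter {kappa : Cardinal.{u}} (U : Filter kappa.ord.ToType) : Prop :=
  ∀ A : kappa.ord.ToType → Set kappa.ord.ToType, (∀ ν, A ν ∈ U) →
    {ρ | ∀ ν < ρ, ρ ∈ A ν} ∈ U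

/-- Auxiliary: transfinite choice of an injective selector. -/
lemma exists_injective_choice {α β : Type v} [LinearOrder α] [WellFoundedLT α]
    (C : α → Set β) (h : ∀ ν : α, #{μ // μ < ν} < #(C ν)) :
    ∃ g : α → β, Function.Injective g ∧ ∀ ν, g ν ∈ C ν := by
  classical
  have key : ∀ (ν : α) (ih : ∀ μ, μ < ν → β),
      (C ν \ Set.range fun p : {μ // μ < ν} => ih p.1 p.2).Nonempty := by
    intro ν ih
    rw [Set.nonempty_iff_ne_empty]
    intro he
    have hsub : C ν ⊆ Set.range fun p : {μ // μ < ν} => ih p.1 p.2 := by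
      intro x hx
      by_contra hxr
      exact (Set.eq_empty_iff_forall_notMem.mp he x) ⟨hx, hxr⟩
    have h1 : #(C ν) ≤ #(Set.range fun p : {μ // μ < ν} => ih p.1 p.2) :=
      Cardinal.mk_le_mk_of_subset hsub
    have h2 : #(Set.range fun p : {μ // μ < ν} => ih p.1 p.2) ≤ #{μ // μ < ν} :=
      Cardinal.mk_range_le
    exact absurd (h1.trans h2) (not_le.mpr (h ν))
  let g : α → β := WellFounded.fix wellFounded_lt
    (fun ν ih => (key ν ih).choose)
  have hg : ∀ ν, g ν = (key ν (fun μ _ => g μ)).choose := fun ν =>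
    WellFounded.fix_eq _ _ _
  have spec : ∀ ν, g ν ∈ C ν \ Set.range (fun p : {μ // μ < ν} => g p.1) := by
    intro ν
    rw [hg ν]
    exact (key ν (fun μ _ => g μ)).choose_spec
  refine ⟨g, ?_, fun ν => (spec ν).1⟩
  intro a b hab
  rcases lt_trichotomy a b with hlt | heq | hlt
  · exact absurd ⟨⟨a, hlt⟩, hab⟩ (spec b).2
  · exact heq
  · exact absurd ⟨⟨b, hlt⟩, hab.symm⟩ (spec a).2

/-- Galvin's theorem: if `κ` is uncountable regular with `2^μ ≤ κ` for all `μ < κ`,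
then every proper normal filter on `κ` satisfies `Gal(κ, U, κ⁺)`. -/
theorem stmt1 (kappa : Cardinal.{u}) (h0 : ℵ₀ < kappa) (hreg : kappa.IsRegular)
    (hpow : ∀ mu < kappa, (2 : Cardinal.{u}) ^ mu ≤ kappa)
    (U : Filter kappa.ord.ToType) (hU : U.NeBot) (hnorm : IsNormalFilter U) :
    Gal U kappa (Order.succ kappa) := by
  classical
  intro A hA
  have hκT : #(kappa.ord.ToType) = kappa := by
    rw [Cardinal.mk_toType, Cardinal.card_ord]
  have hκS : #((Order.succ kappa).ord.ToType) = Order.succ kappa := by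
    rw [Cardinal.mk_toType, Cardinal.card_ord]
  -- the equivalence class of `a` modulo agreement up to `β`
  set Cls : kappa.ord.ToType → (Order.succ kappa).ord.ToType →
      Set ((Order.succ kappa).ord.ToType) :=
    fun β a => {b | ∀ x ≤ β, (x ∈ A a ↔ x ∈ A b)} with hCls
  -- cardinality of initial segments
  have hIic : ∀ β : kappa.ord.ToType, #(Set.Iic β) < kappa := by
    intro β
    have h1 : #(Set.Iio β) < kappa := Cardinal.mk_Iio_ord_toType β
    rw [← Set.Iio_insert]
    calc #(insert β (Set.Iio β) : Set _) ≤ #(Set.Iio β) + 1 := Cardinal.mk_insert_le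
      _ < kappa := Cardinal.add_lt_of_lt hreg.aleph0_le h1
          ((Cardinal.one_lt_aleph0).trans h0)
  -- the set of points with small class modulo `β` is small
  have hsmall : ∀ β : kappa.ord.ToType,
      #({a | #(Cls β a) ≤ kappa} : Set ((Order.succ kappa).ord.ToType)) ≤ kappa := by
    intro β
    set Sm : Set ((Order.succ kappa).ord.ToType) := {a | #(Cls β a) ≤ kappa} with hSm
    let f : Sm → (Set.Iic β → Prop) := fun a x => (x : kappa.ord.ToType) ∈ A a.1
    have hf : ∀ p, #(f ⁻¹' {p}) ≤ kappa := by
      intro p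
      rcases Set.eq_empty_or_nonempty (f ⁻¹' {p}) with he | ⟨a0, ha0⟩
      · rw [he]; simp
      · have hinj : Function.Injective
            (fun a : (f ⁻¹' {p} : Set Sm) => (⟨a.1.1, by
              intro x hx
              have h1 : f a.1 = p := a.2
              have h2 : f a0 = p := ha0
              have := congrFun (h1.trans h2.symm) ⟨x, hx⟩
              exact Iff.symm (iff_of_eq this)⟩ : Cls β a0.1)) := by
          intro a b hab
          simp only [Subtype.mk.injEq] at hab
          exact Subtype.ext (Subtype.ext hab)
        calc #(f ⁻¹' {p}) ≤ #(Cls β a0.1) := Cardinal.mk_le_of_injective hinj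
          _ ≤ kappa := a0.2
    have hb := Cardinal.mk_le_mk_mul_of_mk_preimage_le f hf
    have harrow : #(Set.Iic β → Prop) ≤ kappa := by
      have : #(Set.Iic β → Prop) = 2 ^ #(Set.Iic β) := Cardinal.mk_set
      rw [this]
      exact hpow _ (hIic β)
    calc #Sm ≤ #(Set.Iic β → Prop) * kappa := hb
      _ ≤ kappa * kappa := mul_le_mul_left harrow kappa
      _ = kappa := Cardinal.mul_eq_self hreg.aleph0_le
  -- the union of all small-class points is small; pick `astar` outside it
  have hBad : #(⋃ β, ({a | #(Cls β a) ≤ kappa} :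
      Set ((Order.succ kappa).ord.ToType))) ≤ kappa := by
    calc #(⋃ β, ({a | #(Cls β a) ≤ kappa} : Set ((Order.succ kappa).ord.ToType)))
        ≤ #(kappa.ord.ToType) * ⨆ β, #({a | #(Cls β a) ≤ kappa} :
            Set ((Order.succ kappa).ord.ToType)) := Cardinal.mk_iUnion_le _
      _ ≤ kappa * kappa := by
          apply mul_le_mul' (le_of_eq hκT)
          exact ciSup_le' hsmall
      _ = kappa := Cardinal.mul_eq_self hreg.aleph0_le
  obtain ⟨astar, hastar⟩ : ∃ a, a ∉ ⋃ β, ({a | #(Cls β a) ≤ kappa} :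
      Set ((Order.succ kappa).ord.ToType)) := by
    by_contra hcon
    push_neg at hcon
    have huniv : (⋃ β, ({a | #(Cls β a) ≤ kappa} :
        Set ((Order.succ kappa).ord.ToType))) = Set.univ := Set.eq_univ_of_forall hcon
    have : Order.succ kappa ≤ kappa := by
      calc Order.succ kappa = #((Order.succ kappa).ord.ToType) := hκS.symm
        _ = #(⋃ β, ({a | #(Cls β a) ≤ kappa} :
            Set ((Order.succ kappa).ord.ToType))) := by rw [huniv, Cardinal.mk_univ]
        _ ≤ kappa := hBad
    exact absurd this (not_le.mpr (Order.lt_succ kappa))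
  have hlarge : ∀ β : kappa.ord.ToType, kappa < #(Cls β astar) := by
    intro β
    have := Set.notMem_subset (Set.subset_iUnion
      (fun β => ({a | #(Cls β a) ≤ kappa} : Set ((Order.succ kappa).ord.ToType))) β) hastar
    exact not_le.mp this
  -- choose injectively from the large classes
  obtain ⟨g, hginj, hgC⟩ := exists_injective_choice (fun ν => Cls ν astar)
    (fun ν => lt_trans (Cardinal.mk_Iio_ord_toType ν) (hlarge ν))
  refine ⟨Set.range g, ?_, ?_⟩
  · rw [Cardinal.mk_range_eq g hginj, hκT]
  · have hD : {ρ | ∀ ν < ρ, ρ ∈ A (g ν)} ∈ U :=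
      hnorm (fun ν => A (g ν)) (fun ν => hA _)
    apply U.sets_of_superset (Filter.inter_mem (hA astar) hD)
    intro ρ hρ
    simp only [Set.mem_iInter]
    rintro i ⟨ν, rfl⟩
    rcases lt_or_ge ν ρ with h | h
    · exact hρ.2 ν h
    · exact (hgC ν ρ h).mp hρ.1
end

section
/- Let κ be an uncountable cardinal such that 2^μ ≤ κ for every cardinal μ < κ, and let ⟨X_α : α < κ⁺⟩ be any sequence of subsets of κ. For α < κ⁺ and ξ < κ put H_{α,ξ} = {β < κ⁺ : X_α ∩ ξ = X_β ∩ ξ}. Then there exists α* < κ⁺ such that for every ξ < κ the set H_{α*,ξ} has cardinality κ⁺. -/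
universe u

open Cardinal

/-- If `κ` is an uncountable cardinal with `2^μ ≤ κ` for every `μ < κ`, then for any
sequence `⟨X_α : α < κ⁺⟩` of subsets of `κ` there is `α* < κ⁺` such that for every
`ξ < κ` the set `H_{α*,ξ} = {β < κ⁺ : X_{α*} ∩ ξ = X_β ∩ ξ}` has cardinality `κ⁺`. -/
theorem stmt2 (kappa : Cardinal.{u}) (h0 : ℵ₀ < kappa)
    (hpow : ∀ mu < kappa, (2 : Cardinal.{u}) ^ mu ≤ kappa)
    (X : (Order.succ kappa).ord.ToType → Set kappa.ord.ToType) :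
    ∃ αs : (Order.succ kappa).ord.ToType, ∀ ξ : kappa.ord.ToType,
      #{β : (Order.succ kappa).ord.ToType | X αs ∩ Set.Iio ξ = X β ∩ Set.Iio ξ}
        = Order.succ kappa := by
  have hk : ℵ₀ ≤ kappa := h0.le
  let T := (Order.succ kappa).ord.ToType
  let K := kappa.ord.ToType
  let Bad : K → Set T :=
    fun ξ => {β | #{γ : T | X β ∩ Set.Iio ξ = X γ ∩ Set.Iio ξ} < Order.succ kappa}
  have hBad : ∀ ξ : K, #(Bad ξ) ≤ kappa := by
    intro ξ
    let g : T → Set (Set.Iio ξ) := fun β => Subtype.val ⁻¹' X β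
    have hgiff : ∀ β γ : T,
        X β ∩ Set.Iio ξ = X γ ∩ Set.Iio ξ ↔ g β = g γ := by
      intro β γ
      constructor
      · intro h
        ext x
        have := Set.ext_iff.mp h x.1
        simpa [g, x.2] using this
      · intro h
        ext y
        constructor
        · rintro ⟨hy1, hy2⟩
          have := Set.ext_iff.mp h ⟨y, hy2⟩
          exact ⟨by simpa [g] using this.mp (by simpa [g] using hy1), hy2⟩
        · rintro ⟨hy1, hy2⟩
          have := Set.ext_iff.mp h ⟨y, hy2⟩
          exact ⟨by simpa [g] using this.mpr (by simpa [g] using hy1), hy2⟩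
    let A : Set (Set.Iio ξ) → Set T := fun v => Bad ξ ∩ g ⁻¹' {v}
    have hsub : Bad ξ ⊆ ⋃ v, A v := by
      intro β hβ
      exact Set.mem_iUnion.mpr ⟨g β, hβ, rfl⟩
    have hAle : ∀ v, #(A v) ≤ kappa := by
      intro v
      rcases Set.eq_empty_or_nonempty (A v) with he | ⟨β₀, hβ₀⟩
      · simp [he]
      have hsub2 : A v ⊆ {γ : T | X β₀ ∩ Set.Iio ξ = X γ ∩ Set.Iio ξ} := by
        rintro γ ⟨_, hγ2⟩
        have : g β₀ = g γ := by
          simp only [Set.mem_preimage, Set.mem_singleton_iff] at hγ2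
          rw [hγ2]
          have := hβ₀.2
          simp only [Set.mem_preimage, Set.mem_singleton_iff] at this
          rw [this]
        exact (hgiff β₀ γ).mpr this
      have := (Cardinal.mk_le_mk_of_subset hsub2).trans_lt hβ₀.1
      exact Order.lt_succ_iff.mp this
    calc #(Bad ξ) ≤ #(⋃ v, A v) := Cardinal.mk_le_mk_of_subset hsub
      _ ≤ #(Set (Set.Iio ξ)) * ⨆ v, #(A v) := Cardinal.mk_iUnion_le A
      _ ≤ kappa * kappa := by
          apply mul_le_mul'
          · rw [Cardinal.mk_set]
            exact hpow _ (Cardinal.mk_Iio_toType_ord_lt ξ)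
          · exact ciSup_le' hAle
      _ = kappa := Cardinal.mul_eq_self hk
  have hU : #(⋃ ξ, Bad ξ) < Order.succ kappa := by
    calc #(⋃ ξ, Bad ξ) ≤ #K * ⨆ ξ, #(Bad ξ) := Cardinal.mk_iUnion_le Bad
      _ ≤ kappa * kappa := by
          apply mul_le_mul'
          · exact le_of_eq (Cardinal.mk_ord_toType kappa)
          · exact ciSup_le' hBad
      _ = kappa := Cardinal.mul_eq_self hk
      _ < Order.succ kappa := Order.lt_succ _
  have hne : (⋃ ξ, Bad ξ) ≠ Set.univ := by
    intro h
    rw [h] at hU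
    rw [Cardinal.mk_univ, Cardinal.mk_ord_toType] at hU
    exact lt_irrefl _ hU
  obtain ⟨αs, hαs⟩ := Set.ne_univ_iff_exists_notMem _ |>.mp hne
  refine ⟨αs, fun ξ => ?_⟩
  have h1 : ¬ (#{γ : T | X αs ∩ Set.Iio ξ = X γ ∩ Set.Iio ξ} < Order.succ kappa) := by
    intro h
    exact hαs (Set.mem_iUnion.mpr ⟨ξ, h⟩)
  have h2 : #{γ : T | X αs ∩ Set.Iio ξ = X γ ∩ Set.Iio ξ} ≤ Order.succ kappa := by
    calc #{γ : T | X αs ∩ Set.Iio ξ = X γ ∩ Set.Iio ξ} ≤ #T := Cardinal.mk_set_le _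
      _ = Order.succ kappa := Cardinal.mk_ord_toType _
  exact le_antisymm h2 (not_lt.mp h1)
end

section
/- Let κ be an uncountable regular cardinal, let U be an ultrafilter on the set of ordinals below κ, and let π : κ → κ be a function such that: (i) for every α < κ the set {β < κ : α < π(β)} belongs to U, and (ii) U is closed under π-diagonal intersections, i.e. for every family ⟨Y_α : α < κ⟩ of members of U the set {ν < κ : ∀ α < π(ν), ν ∈ Y_α} belongs to U. Then for every Y ⊆ κ × κ such that {α < κ : {β < κ : (α,β) ∈ Y} ∈ U} ∈ U, there exists X ∈ U with [X]^{2*} ⊆ Y, where [X]^{2*} = {(α,β) ∈ X × X : α < π(β)}. -/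
universe u

open Cardinal

/-- Let `κ` be uncountable regular and `U` an ultrafilter on `κ`, and let `π : κ → κ`
be such that (i) `{β : α < π(β)} ∈ U` for every `α < κ`, and (ii) `U` is closed under
`π`-diagonal intersections.  Then for every `Y ⊆ κ × κ` whose vertical sections lie in
`U` on a set in `U`, there is `X ∈ U` with `[X]^{2*} ⊆ Y`, where
`[X]^{2*} = {(α,β) ∈ X × X : α < π(β)}`. -/
theorem stmt7 (kappa : Cardinal.{u}) (h0 : ℵ₀ < kappa) (hreg : kappa.IsRegular)
    (U : Ultrafilter kappa.ord.ToType) (pi : kappa.ord.ToType → kappa.ord.ToType)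
    (hunb : ∀ α : kappa.ord.ToType, {β | α < pi β} ∈ U)
    (hdiag : ∀ Y : kappa.ord.ToType → Set kappa.ord.ToType, (∀ α, Y α ∈ U) →
      {ν | ∀ α < pi ν, ν ∈ Y α} ∈ U) :
    ∀ Y : Set (kappa.ord.ToType × kappa.ord.ToType),
      {α | {β | (α, β) ∈ Y} ∈ U} ∈ U →
      ∃ X ∈ U, ∀ α ∈ X, ∀ β ∈ X, α < pi β → (α, β) ∈ Y := by
  intro Y hY
  classical
  set A : Set kappa.ord.ToType := {α | {β | (α, β) ∈ Y} ∈ U} with hA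
  set Z : kappa.ord.ToType → Set kappa.ord.ToType :=
    fun α => if α ∈ A then {β | (α, β) ∈ Y} else Set.univ with hZ
  have hZU : ∀ α, Z α ∈ U := by
    intro α
    by_cases h : α ∈ A
    · simp only [hZ, if_pos h]; exact h
    · simp only [hZ, if_neg h]; exact U.univ_mem
  refine ⟨A ∩ {ν | ∀ α < pi ν, ν ∈ Z α}, U.inter_mem hY (hdiag Z hZU), ?_⟩
  intro α hα β hβ hlt
  have := hβ.2 α hlt
  simpa [hZ, hα.1] using this
end

section
/- Let δ be an inaccessible cardinal (uncountable, regular, and 2^μ < δ for every cardinal μ < δ), let μ be a cardinal, and let θ, λ be cardinals with ℵ₀ ≤ θ < δ and λ < δ. Let P be the partial order whose elements are partial functions p from δ × μ to δ with |dom(p)| < δ, ordered by extension (q extends p iff dom(p) ⊆ dom(q) and q agrees with p on dom(p)). Let D ⊆ P be dense and open. Then for every p ∈ P there exists p* ∈ P extending p such that every q ∈ P with dom(q) = dom(p*), with |{x ∈ dom(p*) : q(x) ≠ p*(x)}| ≤ θ, and with q(x) < λ for every x such that q(x) ≠ p*(x), belongs to D. -/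
universe u

open Cardinal

/-- The Cohen poset for adding `μ` functions from `δ` to `δ`: partial functions
from `δ × μ` to `δ` of cardinality `< δ`, represented as `Option`-valued total
functions whose support has cardinality `< δ`. -/
def CohenPoset (delta mu : Cardinal.{u}) : Type u :=
  {p : delta.ord.ToType × mu.ord.ToType → Option delta.ord.ToType //
    #{x | p x ≠ none} < delta}

/-- `q` extends `p`: the domain of `p` is contained in that of `q`
and `q` agrees with `p` on the domain of `p`. -/
def CohenExt {delta mu : Cardinal.{u}} (p q : CohenPoset delta mu) : Prop :=
  ∀ x, p.1 x ≠ none → q.1 x = p.1 x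

/-- The element of `δ.ord.ToType` corresponding to an ordinal `< δ.ord`,
viewed as an ordinal again: `toOrd y < lam.ord` expresses "`y < λ`". -/
noncomputable def toOrd {delta : Cardinal.{u}} (y : delta.ord.ToType) : Ordinal.{u} :=
  ((Ordinal.ToType.mk (o := delta.ord)).symm y : Ordinal.{u})

namespace Stmt8Aux

open scoped Classical

variable {delta mu : Cardinal.{u}}

abbrev Idx (delta mu : Cardinal.{u}) : Type u := delta.ord.ToType × mu.ord.ToType
abbrev Val (delta : Cardinal.{u}) : Type u := delta.ord.ToType

def supp (p : CohenPoset delta mu) : Set (Idx delta mu) := {x | p.1 x ≠ none}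

theorem ext_refl (p : CohenPoset delta mu) : CohenExt p p := fun _ _ => rfl

theorem ext_trans {p q r : CohenPoset delta mu} (h1 : CohenExt p q) (h2 : CohenExt q r) :
    CohenExt p r := fun x hx => by
  have h1x := h1 x hx
  rw [h2 x (h1x.symm ▸ hx), h1x]

theorem supp_mono {p q : CohenPoset delta mu} (h : CohenExt p q) : supp p ⊆ supp q :=
  fun x hx => by
    have := h x hx
    intro h'
    rw [h'] at this
    exact hx this.symm

/-- Perturbation of a condition by a partial reassignment `ε`. -/
noncomputable def perturb (h0 : ℵ₀ < delta) (c : CohenPoset delta mu)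
    (ε : Idx delta mu → Option (Val delta)) (hε : #{x | ε x ≠ none} < delta) :
    CohenPoset delta mu :=
  ⟨fun x => (ε x).elim (c.1 x) some, by
    refine lt_of_le_of_lt (mk_le_mk_of_subset
      (?_ : _ ⊆ ({x | ε x ≠ none} ∪ supp c : Set (Idx delta mu))))
      ((mk_union_le _ _).trans_lt (add_lt_of_lt h0.le hε c.2))
    intro x hx
    by_cases h : ε x = none
    · right
      simp only [Set.mem_setOf_eq] at hx
      rw [h] at hx
      exact hx
    · exact Or.inl h⟩

theorem perturb_some (h0 : ℵ₀ < delta) (c : CohenPoset delta mu) {ε} (hε) {x y}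
    (h : ε x = some y) : (perturb h0 c ε hε).1 x = some y := by
  show (ε x).elim (c.1 x) some = some y
  rw [h]
  rfl

theorem perturb_none (h0 : ℵ₀ < delta) (c : CohenPoset delta mu) {ε} (hε) {x}
    (h : ε x = none) : (perturb h0 c ε hε).1 x = c.1 x := by
  show (ε x).elim (c.1 x) some = c.1 x
  rw [h]
  rfl

theorem perturb_ext (h0 : ℵ₀ < delta) {a b : CohenPoset delta mu} (h : CohenExt a b)
    (ε) (hε) : CohenExt (perturb h0 a ε hε) (perturb h0 b ε hε) := by
  intro x hx
  cases ho : ε x with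
  | some y => rw [perturb_some h0 b hε ho, perturb_some h0 a hε ho]
  | none =>
    rw [perturb_none h0 a hε ho] at hx ⊢
    rw [perturb_none h0 b hε ho]
    exact h x hx

/-- Lemma A: one can extend any condition so that a fixed perturbation lands in `D`. -/
theorem extend_good (h0 : ℵ₀ < delta) {D : Set (CohenPoset delta mu)}
    (hdense : ∀ p : CohenPoset delta mu, ∃ q ∈ D, CohenExt p q)
    (c : CohenPoset delta mu) (ε : Idx delta mu → Option (Val delta))
    (hε : #{x | ε x ≠ none} < delta) :
    ∃ c', CohenExt c c' ∧ perturb h0 c' ε hε ∈ D := by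
  classical
  obtain ⟨d, hdD, hqd⟩ := hdense (perturb h0 c ε hε)
  have hbound : #{x | (fun x => if ε x = none then d.1 x else c.1 x) x ≠ none} < delta := by
    refine lt_of_le_of_lt (mk_le_mk_of_subset
      (?_ : _ ⊆ (supp c ∪ supp d : Set (Idx delta mu))))
      ((mk_union_le _ _).trans_lt (add_lt_of_lt h0.le c.2 d.2))
    intro x hx
    simp only [Set.mem_setOf_eq] at hx
    by_cases h : ε x = none
    · right
      rwa [if_pos h] at hx
    · left
      rwa [if_neg h] at hx
  refine ⟨⟨fun x => if ε x = none then d.1 x else c.1 x, hbound⟩, ?_, ?_⟩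
  · intro x hx
    show (if ε x = none then d.1 x else c.1 x) = c.1 x
    by_cases h : ε x = none
    · rw [if_pos h]
      have hpx : (perturb h0 c ε hε).1 x = c.1 x := perturb_none h0 c hε h
      have := hqd x (hpx.symm ▸ hx)
      rw [this, hpx]
    · rw [if_neg h]
  · have heq : perturb h0 ⟨fun x => if ε x = none then d.1 x else c.1 x, hbound⟩ ε hε = d := by
      apply Subtype.ext
      funext x
      cases ho : ε x with
      | some y =>
        refine (perturb_some h0 _ hε ho).trans ?_
        have hp : (perturb h0 c ε hε).1 x = some y := perturb_some h0 c hε ho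
        exact ((hqd x (by rw [hp]; exact Option.some_ne_none y)).trans hp).symm
      | none =>
        refine (perturb_none h0 _ hε ho).trans ?_
        show (if ε x = none then d.1 x else c.1 x) = d.1 x
        rw [if_pos ho]
    rw [heq]
    exact hdD


section Union

variable {kk : Type u} (h0 : ℵ₀ < delta) (hreg : delta.IsRegular)
  (r : kk → kk → Prop) [IsWellOrder kk r] (hκ : #kk < delta)
  (p : CohenPoset delta mu) (g : kk → CohenPoset delta mu)

/-- Union of a family of conditions over a well-ordered index, resolving conflicts
by taking the value at the least index, with base condition `p`. -/
noncomputable def famUnion : CohenPoset delta mu :=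
  ⟨fun x => if h : ∃ j, (g j).1 x ≠ none then
      (g (WellFounded.min (IsWellFounded.wf (r := r)) {j | (g j).1 x ≠ none} h)).1 x
    else p.1 x, by
    refine lt_of_le_of_lt (mk_le_mk_of_subset
      (?_ : _ ⊆ (supp p ∪ ⋃ j, supp (g j) : Set (Idx delta mu)))) ?_
    · intro x hx
      simp only [Set.mem_setOf_eq] at hx
      by_cases h : ∃ j, (g j).1 x ≠ none
      · right
        obtain ⟨j, hj⟩ := h
        exact Set.mem_iUnion.2 ⟨j, hj⟩
      · left
        rwa [dif_neg h] at hx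
    · refine (mk_union_le _ _).trans_lt (add_lt_of_lt h0.le p.2 ?_)
      refine (mk_iUnion_le _).trans_lt (mul_lt_of_lt h0.le hκ ?_)
      exact iSup_lt_of_isRegular hreg hκ fun j => (g j).2⟩

theorem famUnion_supp_subset :
    supp (famUnion h0 hreg r hκ p g) ⊆ supp p ∪ ⋃ j, supp (g j) := by
  intro x hx
  simp only [supp, Set.mem_setOf_eq, famUnion] at hx
  by_cases h : ∃ j, (g j).1 x ≠ none
  · right
    obtain ⟨j, hj⟩ := h
    exact Set.mem_iUnion.2 ⟨j, hj⟩
  · left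
    rwa [dif_neg h] at hx

theorem famUnion_ext_base (hp : ∀ j, CohenExt p (g j)) :
    CohenExt p (famUnion h0 hreg r hκ p g) := by
  intro x hx
  show (if h : ∃ j, (g j).1 x ≠ none then _ else p.1 x) = p.1 x
  by_cases h : ∃ j, (g j).1 x ≠ none
  · rw [dif_pos h]
    exact hp _ x hx
  · rw [dif_neg h]

theorem famUnion_ext (hchain : ∀ j k, r j k → CohenExt (g j) (g k)) (j : kk) :
    CohenExt (g j) (famUnion h0 hreg r hκ p g) := by
  intro x hx
  have hne : ∃ k, (g k).1 x ≠ none := ⟨j, hx⟩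
  show (if h : ∃ k, (g k).1 x ≠ none then _ else p.1 x) = (g j).1 x
  rw [dif_pos hne]
  set j₀ := WellFounded.min (IsWellFounded.wf (r := r)) {k | (g k).1 x ≠ none} hne with hj₀
  have h₀ : (g j₀).1 x ≠ none := WellFounded.min_mem _ _ hne
  rcases trichotomous_of r j₀ j with h | h | h
  · exact (hchain _ _ h x h₀).symm
  · rw [h]
  · exact absurd h (WellFounded.not_lt_min _ _ hx)

end Union

instance subrelSetWO {α : Type*} (r : α → α → Prop) [IsWellOrder α r] (s : Set α) :
    IsWellOrder (Subtype s) (Subrel r s) :=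
  inferInstanceAs (IsWellOrder (Subtype (fun a => s a)) (Subrel r (fun a => s a)))

section Rec

variable {kk : Type u} (h0 : ℵ₀ < delta) (hreg : delta.IsRegular)
  (r : kk → kk → Prop) [IsWellOrder kk r] (hκ : #kk < delta)
  (p : CohenPoset delta mu) (E : kk → CohenPoset delta mu → CohenPoset delta mu)

/-- Transfinite recursion: at stage `i`, apply `E i` to the union of all previous stages. -/
noncomputable def recF : kk → CohenPoset delta mu :=
  (IsWellFounded.wf (r := r)).fix fun i rec =>
    E i (famUnion h0 hreg (Subrel r {j | r j i}) ((mk_subtype_le _).trans_lt hκ) p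
      fun j => rec j.1 j.2)

/-- The union of the stages before `i`. -/
noncomputable def recC (i : kk) : CohenPoset delta mu :=
  famUnion h0 hreg (Subrel r {j | r j i}) ((mk_subtype_le _).trans_lt hκ) p
    fun j => recF h0 hreg r hκ p E j.1

theorem recF_eq (i : kk) :
    recF h0 hreg r hκ p E i = E i (recC h0 hreg r hκ p E i) :=
  WellFounded.fix_eq _ _ i

theorem recF_props (hE : ∀ i c, CohenExt c (E i c)) (i : kk) :
    CohenExt p (recF h0 hreg r hκ p E i) ∧
      (∀ j, r j i → CohenExt (recF h0 hreg r hκ p E j) (recF h0 hreg r hκ p E i)) ∧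
      CohenExt p (recC h0 hreg r hκ p E i) ∧
      (∀ j, r j i → CohenExt (recF h0 hreg r hκ p E j) (recC h0 hreg r hκ p E i)) := by
  induction i using WellFounded.induction (IsWellFounded.wf (r := r)) with
  | _ i IH => ?_
  have hchain : ∀ a b : ↥{j | r j i}, Subrel r {j | r j i} a b →
      CohenExt (recF h0 hreg r hκ p E a.1) (recF h0 hreg r hκ p E b.1) :=
    fun a b hab => (IH b.1 b.2).2.1 a.1 hab
  have hC_base : CohenExt p (recC h0 hreg r hκ p E i) :=
    famUnion_ext_base h0 hreg (Subrel r {j | r j i}) ((mk_subtype_le _).trans_lt hκ) p _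
      (fun a => (IH a.1 a.2).1)
  have hC_ext : ∀ j, r j i →
      CohenExt (recF h0 hreg r hκ p E j) (recC h0 hreg r hκ p E i) :=
    fun j hj => famUnion_ext h0 hreg (Subrel r {j | r j i})
      ((mk_subtype_le _).trans_lt hκ) p _ hchain ⟨j, hj⟩
  have h1 : CohenExt (recC h0 hreg r hκ p E i) (recF h0 hreg r hκ p E i) := by
    rw [recF_eq]
    exact hE i _
  exact ⟨ext_trans hC_base h1, fun j hj => ext_trans (hC_ext j hj) h1, hC_base, hC_ext⟩

end Rec


section PatternSec

/-- `ε` is an admissible perturbation pattern for `c`: supported inside the domain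
of `c`, with all values `< lam`. -/
def IsPattern (lam : Cardinal.{u}) (c : CohenPoset delta mu)
    (ε : Idx delta mu → Option (Val delta)) : Prop :=
  (∀ x, ε x ≠ none → c.1 x ≠ none) ∧ ∀ x y, ε x = some y → toOrd y < lam.ord

theorem pattern_supp_lt {lam : Cardinal.{u}} {c : CohenPoset delta mu} {ε}
    (h : IsPattern lam c ε) : #{x | ε x ≠ none} < delta :=
  (mk_le_mk_of_subset fun x hx => h.1 x hx).trans_lt c.2

theorem pattern_card (lam : Cardinal.{u}) (h0 : ℵ₀ < delta)
    (hsl : ∀ c < delta, (2 : Cardinal.{u}) ^ c < delta)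
    (hlam : lam < delta) (c : CohenPoset delta mu) :
    #{ε : Idx delta mu → Option (Val delta) // IsPattern lam c ε} < delta := by
  classical
  have hVl : #{y : Val delta // toOrd y < lam.ord} ≤ lam := by
    have hinj : Function.Injective
        (fun y : {y : Val delta // toOrd y < lam.ord} =>
          Ordinal.ToType.mk (o := lam.ord) ⟨toOrd y.1, y.2⟩) := by
      intro a b hab
      have h2 := (Ordinal.ToType.mk (o := lam.ord)).injective hab
      have h3 := congrArg Subtype.val h2
      have h4 : (Ordinal.ToType.mk (o := delta.ord)).symm a.1
          = (Ordinal.ToType.mk (o := delta.ord)).symm b.1 := Subtype.ext h3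
      exact Subtype.ext ((Ordinal.ToType.mk (o := delta.ord)).symm.injective h4)
    calc #{y : Val delta // toOrd y < lam.ord} ≤ #(lam.ord.ToType) :=
          mk_le_of_injective hinj
      _ = lam := by rw [Cardinal.mk_toType, card_ord]
  have hsurj : ∃ f : (↥(supp c) → Option {y : Val delta // toOrd y < lam.ord}) →
      {ε : Idx delta mu → Option (Val delta) // IsPattern lam c ε},
      Function.Surjective f := by
    refine ⟨fun g => ⟨fun x => if hx : c.1 x ≠ none
      then (g ⟨x, hx⟩).map Subtype.val else none, ?_, ?_⟩, ?_⟩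
    · intro x hx
      by_cases h : c.1 x ≠ none
      · exact h
      · simp only [dif_neg h] at hx
        exact absurd rfl hx
    · intro x y hxy
      by_cases hx : c.1 x ≠ none
      · simp only [dif_pos hx] at hxy
        obtain ⟨a, _, ha2⟩ := Option.map_eq_some_iff.mp hxy
        exact ha2 ▸ a.2
      · simp only [dif_neg hx] at hxy
        cases hxy
    · rintro ⟨ε, h1, h2⟩
      refine ⟨fun x => if h : ∃ y, ε x.1 = some y
        then some ⟨h.choose, h2 _ _ h.choose_spec⟩ else none, ?_⟩
      apply Subtype.ext
      funext x
      show (if hx : c.1 x ≠ none then _ else none) = ε x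
      by_cases hx : c.1 x ≠ none
      · rw [dif_pos hx]
        by_cases hy : ∃ y, ε x = some y
        · show Option.map _ (if h : ∃ y, ε x = some y then _ else none) = ε x
          rw [dif_pos hy, Option.map_some]
          exact hy.choose_spec.symm
        · show Option.map _ (if h : ∃ y, ε x = some y then _ else none) = ε x
          rw [dif_neg hy, Option.map_none]
          cases he : ε x with
          | none => rfl
          | some y => exact absurd ⟨y, he⟩ hy
      · rw [dif_neg hx]
        cases he : ε x with
        | none => rfl
        | some y => exact absurd (h1 x (by rw [he]; exact Option.some_ne_none y)) hx
  obtain ⟨f, hf⟩ := hsurj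
  calc #{ε : Idx delta mu → Option (Val delta) // IsPattern lam c ε}
      ≤ #(↥(supp c) → Option {y : Val delta // toOrd y < lam.ord}) := mk_le_of_surjective hf
    _ = #(Option {y : Val delta // toOrd y < lam.ord}) ^ #(↥(supp c)) := (power_def _ _).symm
    _ ≤ (lam + 1) ^ #(↥(supp c)) := by
        refine power_le_power_right ?_
        rw [mk_option]
        exact add_le_add_left hVl 1
    _ ≤ ((2 : Cardinal.{u}) ^ (lam + 1)) ^ #(↥(supp c)) :=
        power_le_power_right (cantor _).le
    _ = (2 : Cardinal.{u}) ^ ((lam + 1) * #(↥(supp c))) := (power_mul).symm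
    _ < delta := hsl _ (mul_lt_of_lt h0.le
        (add_lt_of_lt h0.le hlam (one_lt_aleph0.trans h0)) c.2)

variable (h0 : ℵ₀ < delta) {D : Set (CohenPoset delta mu)}
  (hdense : ∀ p : CohenPoset delta mu, ∃ q ∈ D, CohenExt p q)
  (lam : Cardinal.{u}) (c : CohenPoset delta mu)

/-- The step function handling one pattern. -/
noncomputable def Bstep (i : {ε // IsPattern lam c ε}) (c₀ : CohenPoset delta mu) :
    CohenPoset delta mu :=
  (extend_good h0 hdense c₀ i.1 (pattern_supp_lt i.2)).choose

theorem Bstep_ext (i : {ε // IsPattern lam c ε}) (c₀ : CohenPoset delta mu) :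
    CohenExt c₀ (Bstep h0 hdense lam c i c₀) :=
  (extend_good h0 hdense c₀ i.1 (pattern_supp_lt i.2)).choose_spec.1

theorem Bstep_mem (i : {ε // IsPattern lam c ε}) (c₀ : CohenPoset delta mu)
    (hε : #{x | i.1 x ≠ none} < delta) :
    perturb h0 (Bstep h0 hdense lam c i c₀) i.1 hε ∈ D :=
  (extend_good h0 hdense c₀ i.1 (pattern_supp_lt i.2)).choose_spec.2

include hdense in
/-- Lemma B: every condition has an extension `c'` such that every perturbation of `c'`
by a pattern admissible for `c` lies in `D`. -/
theorem exists_good_ext (hreg : delta.IsRegular)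
    (hsl : ∀ c < delta, (2 : Cardinal.{u}) ^ c < delta) (hlam : lam < delta)
    (hopen : ∀ p ∈ D, ∀ q : CohenPoset delta mu, CohenExt p q → q ∈ D) :
    ∃ c', CohenExt c c' ∧ ∀ ε (hε : #{x | ε x ≠ none} < delta),
      IsPattern lam c ε → perturb h0 c' ε hε ∈ D := by
  classical
  have hκ : #{ε // IsPattern lam c ε} < delta := pattern_card lam h0 hsl hlam c
  set r : {ε // IsPattern lam c ε} → {ε // IsPattern lam c ε} → Prop := WellOrderingRel with hr
  let E := Bstep h0 hdense lam c
  have hE : ∀ i c₀, CohenExt c₀ (E i c₀) := Bstep_ext h0 hdense lam c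
  have props := recF_props h0 hreg r hκ c E hE
  refine ⟨famUnion h0 hreg r hκ c (recF h0 hreg r hκ c E),
    famUnion_ext_base h0 hreg r hκ c _ (fun j => (props j).1), ?_⟩
  intro ε hε hpat
  have hFi : perturb h0 (recF h0 hreg r hκ c E ⟨ε, hpat⟩) ε hε ∈ D := by
    rw [recF_eq]
    exact Bstep_mem h0 hdense lam c ⟨ε, hpat⟩ _ hε
  have hcFi : CohenExt (recF h0 hreg r hκ c E ⟨ε, hpat⟩)
      (famUnion h0 hreg r hκ c (recF h0 hreg r hκ c E)) :=
    famUnion_ext h0 hreg r hκ c _ (fun a b hab => (props b).2.1 a hab) ⟨ε, hpat⟩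
  exact hopen _ hFi _ (perturb_ext h0 hcFi ε hε)

end PatternSec

end Stmt8Aux


open Stmt8Aux in
/-- Let `δ` be inaccessible, `μ` a cardinal, and `ℵ₀ ≤ θ < δ`, `λ < δ`.  If `D` is a
dense open subset of the Cohen poset of partial functions from `δ × μ` to `δ` of size
`< δ`, then every `p` has an extension `p*` such that every `q` with the same domain
as `p*`, differing from `p*` in at most `θ` many places, and taking values `< λ` at
all places where it differs from `p*`, belongs to `D`. -/
theorem stmt8 (delta mu theta lam : Cardinal.{u})
    (h0 : ℵ₀ < delta) (hreg : delta.IsRegular)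
    (hsl : ∀ c < delta, (2 : Cardinal.{u}) ^ c < delta)
    (htheta0 : ℵ₀ ≤ theta) (htheta : theta < delta) (hlam : lam < delta)
    (D : Set (CohenPoset delta mu))
    (hdense : ∀ p : CohenPoset delta mu, ∃ q ∈ D, CohenExt p q)
    (hopen : ∀ p ∈ D, ∀ q : CohenPoset delta mu, CohenExt p q → q ∈ D) :
    ∀ p : CohenPoset delta mu, ∃ pstar : CohenPoset delta mu, CohenExt p pstar ∧
      ∀ q : CohenPoset delta mu,
        {x | q.1 x ≠ none} = {x | pstar.1 x ≠ none} →
        #{x | q.1 x ≠ pstar.1 x} ≤ theta →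
        (∀ x y, q.1 x ≠ pstar.1 x → q.1 x = some y → toOrd y < lam.ord) →
        q ∈ D := by
  classical
  intro p
  have hκ : #((Order.succ theta).ord.ToType) < delta := by
    rw [Cardinal.mk_toType, card_ord]
    exact lt_of_le_of_lt (Order.succ_le_of_lt (cantor theta)) (hsl theta htheta)
  set K := (Order.succ theta).ord.ToType with hK
  let E : K → CohenPoset delta mu → CohenPoset delta mu := fun _ c =>
    (exists_good_ext h0 hdense lam c hreg hsl hlam hopen).choose
  have hE : ∀ (i : K) c, CohenExt c (E i c) := fun i c =>
    (exists_good_ext h0 hdense lam c hreg hsl hlam hopen).choose_spec.1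
  have Espec : ∀ (i : K) c ε (hε : #{x | ε x ≠ none} < delta), IsPattern lam c ε →
      perturb h0 (E i c) ε hε ∈ D := fun i c =>
    (exists_good_ext h0 hdense lam c hreg hsl hlam hopen).choose_spec.2
  haveI : IsWellOrder K (· < ·) :=
    isWellOrder_lt
  have props := recF_props h0 hreg ((· < ·) : K → K → Prop) hκ p E hE
  set F := recF h0 hreg ((· < ·) : K → K → Prop) hκ p E with hF
  set pstar := famUnion h0 hreg ((· < ·) : K → K → Prop) hκ p F with hpstar
  refine ⟨pstar, famUnion_ext_base h0 hreg _ hκ p F (fun j => (props j).1), ?_⟩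
  intro q hdom hcard hval
  have hiff : ∀ x, q.1 x ≠ none ↔ pstar.1 x ≠ none := fun x => Set.ext_iff.mp hdom x
  -- every difference point is in the support of some stage
  have hS : ∀ x, q.1 x ≠ pstar.1 x → ∃ j : K, (F j).1 x ≠ none := by
    intro x hne
    have hips : pstar.1 x ≠ none := by
      intro hnone
      have hqx : q.1 x = none := by
        by_contra hq
        exact (hiff x).mp hq hnone
      exact hne (hqx.trans hnone.symm)
    have := famUnion_supp_subset h0 hreg ((· < ·) : K → K → Prop) hκ p F hips
    rcases this with h | h
    · haveI : Nonempty K :=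
        Ordinal.nonempty_toType_iff.2 (fun h0' => by
          have : Order.succ theta = 0 := Cardinal.ord_eq_zero.mp h0'
          exact (Order.succ_ne_bot (α := Cardinal) theta) this)
      exact ⟨Classical.arbitrary K, supp_mono (props (Classical.arbitrary K)).1 h⟩
    · obtain ⟨sj, ⟨j, rfl⟩, hj⟩ := h
      exact ⟨j, hj⟩
  -- pick a stage beyond all difference points
  set S := {x | q.1 x ≠ pstar.1 x} with hSdef
  let jf : S → K := fun x => (hS x.1 x.2).choose
  have hjf : ∀ x : S, (F (jf x)).1 x.1 ≠ none := fun x => (hS x.1 x.2).choose_spec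
  have hlim : Order.IsSuccLimit ((Order.succ theta).ord) :=
    Cardinal.isSuccLimit_ord (htheta0.trans (Order.le_succ theta))
  let f : S → Ordinal.{u} := fun x =>
    Order.succ ((Ordinal.ToType.mk (o := (Order.succ theta).ord)).symm (jf x)).1
  have hfo : ∀ x, f x < (Order.succ theta).ord := fun x =>
    hlim.succ_lt ((Ordinal.ToType.mk (o := (Order.succ theta).ord)).symm (jf x)).2
  have hcof : #S < ((Order.succ theta).ord).cof := by
    rw [(Cardinal.isRegular_succ htheta0).cof_eq]
    exact hcard.trans_lt (Order.lt_succ theta)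
  have hsup : iSup f < (Order.succ theta).ord := Ordinal.iSup_lt_ord hcof hfo
  let i : K := Ordinal.ToType.mk (o := (Order.succ theta).ord) ⟨iSup f, hsup⟩
  have hji : ∀ x : S, jf x < i := by
    intro x
    have h1 : (Ordinal.ToType.mk (o := (Order.succ theta).ord)).symm (jf x)
        < (Ordinal.ToType.mk (o := (Order.succ theta).ord)).symm i := by
      rw [OrderIso.symm_apply_apply]
      show (Ordinal.ToType.mk (o := (Order.succ theta).ord)).symm (jf x)
        < (⟨iSup f, hsup⟩ : Set.Iio ((Order.succ theta).ord))
      apply Subtype.coe_lt_coe.mp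
      exact lt_of_lt_of_le (Order.lt_succ _) (Ordinal.le_iSup f x)
    exact (OrderIso.lt_iff_lt _).mp h1
  -- the pattern of q relative to pstar
  set ε : Idx delta mu → Option (Val delta) :=
    fun x => if q.1 x = pstar.1 x then none else q.1 x with hεdef
  have hεne : ∀ x, ε x ≠ none → q.1 x ≠ pstar.1 x := by
    intro x hx
    by_contra h
    exact hx (by simp only [hεdef, if_pos h])
  have hpat : IsPattern lam (recC h0 hreg ((· < ·) : K → K → Prop) hκ p E i) ε := by
    constructor
    · intro x hx
      have hne := hεne x hx
      have h1 : CohenExt (F (jf ⟨x, hne⟩)) (recC h0 hreg ((· < ·) : K → K → Prop) hκ p E i) :=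
        (props i).2.2.2 _ (hji ⟨x, hne⟩)
      exact supp_mono h1 (hjf ⟨x, hne⟩)
    · intro x y hx
      have hne : q.1 x ≠ pstar.1 x := by
        by_contra h
        rw [hεdef] at hx
        simp only [if_pos h] at hx
        cases hx
      have hq : q.1 x = some y := by
        rw [hεdef] at hx
        simpa only [if_neg hne] using hx
      exact hval x y hne hq
  have hεlt : #{x | ε x ≠ none} < delta := pattern_supp_lt hpat
  have hmem : perturb h0 (F i) ε hεlt ∈ D := by
    rw [hF, recF_eq]
    exact Espec i _ ε hεlt hpat
  have hFip : CohenExt (F i) pstar :=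
    famUnion_ext h0 hreg _ hκ p F (fun a b hab => (props b).2.1 a hab) i
  have hmem2 : perturb h0 pstar ε hεlt ∈ D := hopen _ hmem _ (perturb_ext h0 hFip ε hεlt)
  have heq : perturb h0 pstar ε hεlt = q := by
    apply Subtype.ext
    funext x
    by_cases hne : q.1 x = pstar.1 x
    · rw [perturb_none h0 pstar hεlt (show ε x = none by simp only [hεdef, if_pos hne])]
      exact hne.symm
    · cases hq : q.1 x with
      | none =>
        exfalso
        have : pstar.1 x = none := by
          by_contra hp
          exact ((hiff x).mpr hp) hq
        exact hne (hq.trans this.symm)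
      | some y =>
        rw [perturb_some h0 pstar hεlt
          (show ε x = some y from by
            show (if q.1 x = pstar.1 x then none else q.1 x) = some y
            rw [if_neg hne, hq])]
  rw [← heq]
  exact hmem2
end

section
/- Let κ be an uncountable regular cardinal such that 2^μ ≤ κ for every cardinal μ < κ and 2^κ = κ⁺. Let Q be the set of partial functions from κ × κ⁺⁺ to κ whose domain has cardinality less than κ, and for each α < κ⁺⁺ let f_α : κ → Q. Then there exists a set B' ⊆ κ⁺⁺ of cardinality κ⁺⁺ such that for all α₁, α₂ ∈ B' and every β < κ, the partial functions f_{α₁}(β) and f_{α₂}(β) are compatible, i.e. they agree on the intersection of their domains. -/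
universe u

open Cardinal Ordinal Set

universe v

/-- The Cohen poset `Q`: partial functions from `κ × κ⁺⁺` to `κ` whose domain has
cardinality `< κ`, represented as `Option`-valued total functions whose support
has cardinality `< κ`. -/
def CohenQ (kappa : Cardinal.{u}) : Type u :=
  {p : kappa.ord.ToType × (Order.succ (Order.succ kappa)).ord.ToType →
      Option kappa.ord.ToType // #{x | p x ≠ none} < kappa}

/-- Two partial functions are compatible if they agree on the intersection
of their domains. -/
def Compat {kappa : Cardinal.{u}} (p q : CohenQ kappa) : Prop :=
  ∀ x, p.1 x ≠ none → q.1 x ≠ none → p.1 x = q.1 x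

noncomputable def wrec {X : Type v} (pick : ∀ ι : Ordinal.{u}, (∀ ι' < ι, X) → X) :
    Ordinal.{u} → X :=
  Ordinal.lt_wf.fix (fun ι prev => pick ι prev)

theorem wrec_eq {X : Type v} (pick : ∀ ι : Ordinal.{u}, (∀ ι' < ι, X) → X) (ι : Ordinal.{u}) :
    wrec pick ι = pick ι (fun ι' _ => wrec pick ι') :=
  WellFounded.fix_eq _ _ _

theorem exists_big_fiber {A Z : Type u} {c : Cardinal.{u}} (hc : c.IsRegular)
    (hA : c ≤ #A) (hZ : #Z < c) (t : A → Z) : ∃ z : Z, c ≤ #{a : A | t a = z} := by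
  by_contra h
  push_neg at h
  have h1 : #A = Cardinal.sum fun z : Z => #{a : A | t a = z} := by
    rw [← Cardinal.mk_sigma]
    exact mk_congr (Equiv.sigmaFiberEquiv t).symm
  have h2 : Cardinal.sum (fun z : Z => #{a : A | t a = z}) < c :=
    Cardinal.sum_lt_of_isRegular hc hZ (fun z => h z)
  exact absurd (hA.trans_lt (h1 ▸ h2)) (lt_irrefl c).elim



namespace Stmt11Aux

variable (kappa : Cardinal.{u})

noncomputable abbrev Lam : Cardinal.{u} := Order.succ (Order.succ kappa)
noncomputable abbrev TT : Type u := (Lam kappa).ord.ToType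
noncomputable abbrev KK : Type u := kappa.ord.ToType

noncomputable abbrev eT : Set.Iio (Lam kappa).ord ≃o TT kappa :=
  (Ordinal.ToType.mk (o := ((Lam kappa).ord)))

noncomputable abbrev tin (x : TT kappa) : Ordinal.{u} :=
  ((eT kappa).symm x : Set.Iio (Lam kappa).ord)

theorem tin_lt (x : TT kappa) : tin kappa x < (Lam kappa).ord :=
  ((eT kappa).symm x).2

theorem tin_inj : Function.Injective (tin kappa) := fun x y h =>
  (eT kappa).symm.injective (Subtype.ext h)

theorem tin_lt_tin {x y : TT kappa} : tin kappa x < tin kappa y ↔ x < y :=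
  (Subtype.coe_lt_coe).trans (eT kappa).symm.lt_iff_lt

theorem mk_T : #(TT kappa) = Lam kappa := by
  rw [mk_toType, card_ord]

theorem mk_K : #(KK kappa) = kappa := by
  rw [mk_toType, card_ord]

theorem Lam_reg (h0 : ℵ₀ < kappa) : (Lam kappa).IsRegular :=
  isRegular_succ ((h0.le.trans (Order.le_succ _)))

theorem kappa_lt_Lam : kappa < Lam kappa :=
  (Order.lt_succ kappa).trans (Order.lt_succ _)

theorem succ_lt_Lam : Order.succ kappa < Lam kappa := Order.lt_succ _

variable (f : TT kappa → KK kappa → CohenQ kappa)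

def S (α : TT kappa) : Set (TT kappa) := {c | ∃ β ξ, (f α β).1 (ξ, c) ≠ none}

theorem S_le (h0 : ℵ₀ < kappa) (α : TT kappa) : #(S kappa f α) ≤ kappa := by
  have hsub : S kappa f α ⊆ ⋃ β : KK kappa, Prod.snd '' {x | (f α β).1 x ≠ none} := by
    rintro c ⟨β, ξ, h⟩
    exact Set.mem_iUnion.2 ⟨β, ⟨(ξ, c), h, rfl⟩⟩
  refine (mk_le_mk_of_subset hsub).trans ?_
  refine (mk_iUnion_le _).trans ?_
  have h1 : (⨆ β : KK kappa, #(Prod.snd '' {x | (f α β).1 x ≠ none})) ≤ kappa := by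
    refine ciSup_le' fun β => ?_
    exact (mk_image_le).trans (f α β).2.le
  calc #(KK kappa) * (⨆ β : KK kappa, #(Prod.snd '' {x | (f α β).1 x ≠ none}))
      ≤ kappa * kappa := by
        rw [mk_K]; exact mul_le_mul_right h1 _
    _ = kappa := mul_eq_self h0.le

noncomputable def oS (α : TT kappa) : Ordinal.{u} := ⨆ c : S kappa f α, tin kappa c.1

theorem le_oS {α : TT kappa} {c : TT kappa} (hc : c ∈ S kappa f α) :
    tin kappa c ≤ oS kappa f α :=
  le_ciSup (Ordinal.bddAbove_range _) (⟨c, hc⟩ : S kappa f α)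

theorem oS_lt (h0 : ℵ₀ < kappa) (α : TT kappa) : oS kappa f α < (Lam kappa).ord := by
  refine Ordinal.iSup_lt_ord ?_ fun c => tin_lt kappa c.1
  rw [(Lam_reg kappa h0).cof_eq]
  exact (S_le kappa f h0 α).trans_lt (kappa_lt_Lam kappa)

def Agood (γ β : Ordinal.{u}) : Set (TT kappa) :=
  {α | ∀ c ∈ S kappa f α, tin kappa c < γ ∨ β ≤ tin kappa c}


theorem exists_good (h0 : ℵ₀ < kappa) :
    ∃ γ < (Lam kappa).ord, ∀ β < (Lam kappa).ord, Lam kappa ≤ #(Agood kappa f γ β) := by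
  by_contra hcon
  push_neg at hcon
  set θ := (Lam kappa).ord with hθ
  have hθlim : Order.IsSuccLimit θ := Cardinal.isSuccLimit_ord ((h0.le.trans (Order.le_succ _)).trans (Order.le_succ _))
  set F : Ordinal.{u} → Ordinal.{u} := fun γ => if h : γ < θ then (hcon γ h).choose else 0 with hFdef
  have hF1 : ∀ γ, γ < θ → F γ < θ := by
    intro γ h
    rw [hFdef]; simp only [dif_pos h]
    exact (hcon γ h).choose_spec.1
  have hF2 : ∀ γ, γ < θ → #(Agood kappa f γ (F γ)) < Lam kappa := by
    intro γ h
    rw [hFdef]; simp only [dif_pos h]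
    exact (hcon γ h).choose_spec.2
  set g : Ordinal.{u} → Ordinal.{u} :=
    wrec (fun ι prev => Ordinal.bsup ι (fun a ha => F (prev a ha) + 1)) with hgdef
  have g_eq : ∀ ι : Ordinal.{u}, g ι = Ordinal.bsup ι (fun a _ => F (g a) + 1) :=
    fun ι => wrec_eq _ ι
  have hgle : ∀ ι' ι : Ordinal.{u}, ι' < ι → F (g ι') + 1 ≤ g ι := by
    intro ι' ι h
    rw [g_eq ι]
    exact Ordinal.le_bsup _ ι' h
  set μo := (Order.succ kappa).ord with hμo
  have hμθ : μo < θ := by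
    rw [hμo, hθ, Cardinal.ord_lt_ord]
    exact succ_lt_Lam kappa
  have hg : ∀ ι, ι < μo → g ι < θ := by
    intro ι
    induction ι using Ordinal.induction with
    | h ι IH =>
      intro hι
      rw [g_eq ι]
      refine Ordinal.bsup_lt_ord ?_ ?_
      · rw [(Lam_reg kappa h0).cof_eq]
        exact ((Ordinal.card_le_card hι.le).trans_eq (by rw [hμo, card_ord])).trans_lt
          (succ_lt_Lam kappa)
      · intro a ha
        have hga : g a < θ := IH a ha (ha.trans hι)
        rw [Ordinal.add_one_eq_succ]
        exact hθlim.succ_lt (hF1 _ hga)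
  -- index the sequence by the type of size κ⁺
  set M := μo.ToType with hM
  have hmkM : #M = Order.succ kappa := by rw [hM, mk_toType, hμo, card_ord]
  set om : M → Ordinal.{u} := fun m => (((Ordinal.ToType.mk (o := μo))).symm m : Set.Iio μo) with homdef
  have hom_lt : ∀ m, om m < μo := fun m => (((Ordinal.ToType.mk (o := μo))).symm m).2
  have hom_inj : Function.Injective om := fun m m' h =>
    ((Ordinal.ToType.mk (o := μo))).symm.injective (Subtype.ext h)
  set U : Set (TT kappa) := ⋃ m : M, Agood kappa f (g (om m)) (F (g (om m))) with hU
  have hUlt : #U < Lam kappa := by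
    refine (mk_iUnion_le_sum_mk).trans_lt ?_
    refine Cardinal.sum_lt_of_isRegular (Lam_reg kappa h0) ?_ ?_
    · rw [hmkM]; exact succ_lt_Lam kappa
    · intro m
      exact hF2 _ (hg _ (hom_lt m))
  obtain ⟨α, hα⟩ : ∃ α : TT kappa, α ∉ U := by
    by_contra hall
    push_neg at hall
    have : (Set.univ : Set (TT kappa)) ⊆ U := fun x _ => hall x
    have h1 : Lam kappa ≤ #U := by
      calc Lam kappa = #(TT kappa) := (mk_T kappa).symm
        _ = #(Set.univ : Set (TT kappa)) := mk_univ.symm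
        _ ≤ #U := mk_le_mk_of_subset this
    exact absurd (h1.trans_lt hUlt) (lt_irrefl _)
  have hαm : ∀ m : M, ∃ c ∈ S kappa f α, g (om m) ≤ tin kappa c ∧ tin kappa c < F (g (om m)) := by
    intro m
    have : α ∉ Agood kappa f (g (om m)) (F (g (om m))) := fun h => hα (Set.mem_iUnion.2 ⟨m, h⟩)
    rw [Agood, Set.mem_setOf_eq] at this
    push_neg at this
    obtain ⟨c, hc1, hc2, hc3⟩ := this
    exact ⟨c, hc1, hc2, hc3⟩
  choose cfun hcS hclb hcub using hαm
  have hj : Function.Injective (fun m : M => (⟨cfun m, hcS m⟩ : S kappa f α)) := by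
    intro m m' h
    by_contra hne
    have hcc : cfun m = cfun m' := congrArg Subtype.val h
    have homne : om m ≠ om m' := fun hh => hne (hom_inj hh)
    rcases lt_or_gt_of_ne homne with hlt | hlt
    · have h1 : tin kappa (cfun m) < F (g (om m)) := hcub m
      have h2 : F (g (om m)) + 1 ≤ g (om m') := hgle _ _ hlt
      have h3 : g (om m') ≤ tin kappa (cfun m') := hclb m'
      rw [← hcc] at h3
      have := h1.trans_le ((le_of_lt (lt_of_lt_of_le (lt_add_one _) h2)).trans h3)
      exact absurd this (lt_irrefl _)
    · have h1 : tin kappa (cfun m') < F (g (om m')) := hcub m'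
      have h2 : F (g (om m')) + 1 ≤ g (om m) := hgle _ _ hlt
      have h3 : g (om m) ≤ tin kappa (cfun m) := hclb m
      rw [hcc] at h3
      have := h1.trans_le ((le_of_lt (lt_of_lt_of_le (lt_add_one _) h2)).trans h3)
      exact absurd this (lt_irrefl _)
  have hle : Order.succ kappa ≤ kappa := by
    calc Order.succ kappa = #M := hmkM.symm
      _ ≤ #(S kappa f α) := mk_le_of_injective hj
      _ ≤ kappa := S_le kappa f h0 α
  exact absurd hle (not_le.2 (Order.lt_succ kappa))


theorem exists_chain (h0 : ℵ₀ < kappa) {γ : Ordinal.{u}}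
    (hgood : ∀ β < (Lam kappa).ord, Lam kappa ≤ #(Agood kappa f γ β)) :
    ∃ G' : TT kappa → TT kappa, Function.Injective G' ∧
      ∀ t t', t ≠ t' → ∀ c, c ∈ S kappa f (G' t) → c ∈ S kappa f (G' t') →
        tin kappa c < γ := by
  set θ := (Lam kappa).ord with hθ
  have hθlim : Order.IsSuccLimit θ :=
    Cardinal.isSuccLimit_ord ((h0.le.trans (Order.le_succ _)).trans (Order.le_succ _))
  have hne : Nonempty (TT kappa) := by
    rw [Ordinal.nonempty_toType_iff]
    exact hθlim.ne_zero
  set Bsup : ∀ ι : Ordinal.{u}, (∀ ι' < ι, TT kappa) → Ordinal.{u} :=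
    fun ι prev => Ordinal.bsup ι (fun a ha => oS kappa f (prev a ha) + 1) with hBdef
  have hBlt : ∀ ι (hι : ι < θ) prev, Bsup ι prev < θ := by
    intro ι hι prev
    refine Ordinal.bsup_lt_ord ?_ ?_
    · rw [(Lam_reg kappa h0).cof_eq]
      exact Cardinal.lt_ord.1 hι
    · intro a ha
      rw [Ordinal.add_one_eq_succ]
      exact hθlim.succ_lt (oS_lt kappa f h0 _)
  have hex : ∀ ι (hι : ι < θ) (prev : ∀ ι' < ι, TT kappa),
      ∃ α, α ∈ Agood kappa f γ (Bsup ι prev) ∧ ∀ ι' (h : ι' < ι), α ≠ prev ι' h := by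
    intro ι hι prev
    set E : Set (TT kappa) := {x | ∃ ι', ∃ h : ι' < ι, prev ι' h = x} with hE
    have hEle : #E ≤ ι.card := by
      rw [← mk_toType]
      set j : E → ι.ToType := fun x =>
        (Ordinal.ToType.mk (o := ι)) ⟨x.2.choose, x.2.choose_spec.choose⟩ with hj
      have : Function.Injective j := by
        intro x y hxy
        have h1 : x.2.choose = y.2.choose := by
          have := ((Ordinal.ToType.mk (o := ι))).injective hxy
          exact congrArg Subtype.val this
        apply Subtype.ext
        rw [← x.2.choose_spec.choose_spec, ← y.2.choose_spec.choose_spec]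
        congr 1
      exact mk_le_of_injective this
    have hElt : #E < Lam kappa :=
      hEle.trans_lt (Cardinal.lt_ord.1 hι)
    by_contra hno
    push_neg at hno
    have hsub : Agood kappa f γ (Bsup ι prev) ⊆ E := by
      intro α hα
      obtain ⟨ι', h, hh⟩ := hno α hα
      exact ⟨ι', h, hh.symm⟩
    exact absurd ((hgood _ (hBlt ι hι prev)).trans (mk_le_mk_of_subset hsub)) hElt.not_ge
  set pick : ∀ ι : Ordinal.{u}, (∀ ι' < ι, TT kappa) → TT kappa :=
    fun ι prev => if h : ι < θ then (hex ι h prev).choose else Classical.choice hne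
    with hpickdef
  set G : Ordinal.{u} → TT kappa := wrec pick with hGdef
  have G_eq : ∀ ι, G ι = pick ι (fun ι' _ => G ι') := fun ι => wrec_eq _ ι
  have Gspec : ∀ ι, ι < θ →
      G ι ∈ Agood kappa f γ (Bsup ι (fun a _ => G a)) ∧ ∀ ι' (h : ι' < ι), G ι ≠ G ι' := by
    intro ι hι
    have h1 : G ι = (hex ι hι (fun a _ => G a)).choose := by
      rw [G_eq ι, hpickdef]; simp only [dif_pos hι]
    rw [h1]
    exact (hex ι hι (fun a _ => G a)).choose_spec
  refine ⟨fun t => G (tin kappa t), ?_, ?_⟩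
  · intro t t' h
    by_contra hne'
    have htin : tin kappa t ≠ tin kappa t' := fun hh => hne' (tin_inj kappa hh)
    rcases lt_or_gt_of_ne htin with hlt | hlt
    · exact (Gspec _ (tin_lt kappa t')).2 _ hlt h.symm
    · exact (Gspec _ (tin_lt kappa t)).2 _ hlt h
  · intro t t' hne' c hc hc'
    have key : ∀ a b : TT kappa, tin kappa a < tin kappa b →
        c ∈ S kappa f (G (tin kappa a)) → c ∈ S kappa f (G (tin kappa b)) →
        tin kappa c < γ := by
      intro a b hab hca hcb
      rcases (Gspec _ (tin_lt kappa b)).1 c hcb with h | h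
      · exact h
      · exfalso
        have h1 : tin kappa c ≤ oS kappa f (G (tin kappa a)) := le_oS kappa f hca
        have h2 : oS kappa f (G (tin kappa a)) + 1 ≤ Bsup (tin kappa b) (fun a _ => G a) :=
          Ordinal.le_bsup _ _ hab
        have hcon : oS kappa f (G (tin kappa a)) + 1 ≤ oS kappa f (G (tin kappa a)) :=
          (h2.trans h).trans h1
        exact absurd hcon (lt_add_one _).not_ge
    have htin : tin kappa t ≠ tin kappa t' := fun hh => hne' (tin_inj kappa hh)
    rcases lt_or_gt_of_ne htin with hlt | hlt
    · exact key t t' hlt hc hc'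
    · exact key t' t hlt hc' hc


theorem succ_pow (h0 : ℵ₀ < kappa) (hch : (2 : Cardinal.{u}) ^ kappa = Order.succ kappa) :
    (Order.succ kappa) ^ kappa = Order.succ kappa := by
  rw [← hch, ← Cardinal.power_mul, Cardinal.mul_eq_self h0.le]

end Stmt11Aux

open Stmt11Aux

/-- Let `κ` be uncountable regular with `2^μ ≤ κ` for all `μ < κ` and `2^κ = κ⁺`.
For any functions `f_α : κ → Q` (`α < κ⁺⁺`), where `Q` is the Cohen poset of partial
functions from `κ × κ⁺⁺` to `κ` of size `< κ`, there is a set `B' ⊆ κ⁺⁺` of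
cardinality `κ⁺⁺` such that for all `α₁, α₂ ∈ B'` and all `β < κ`, the conditions
`f_{α₁}(β)` and `f_{α₂}(β)` are compatible. -/
theorem stmt11 (kappa : Cardinal.{u}) (h0 : ℵ₀ < kappa) (hreg : kappa.IsRegular)
    (hpow : ∀ mu < kappa, (2 : Cardinal.{u}) ^ mu ≤ kappa)
    (hch : (2 : Cardinal.{u}) ^ kappa = Order.succ kappa)
    (f : (Order.succ (Order.succ kappa)).ord.ToType → kappa.ord.ToType → CohenQ kappa) :
    ∃ B' : Set (Order.succ (Order.succ kappa)).ord.ToType,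
      #B' = Order.succ (Order.succ kappa) ∧
      ∀ α₁ ∈ B', ∀ α₂ ∈ B', ∀ β : kappa.ord.ToType, Compat (f α₁ β) (f α₂ β) := by
  obtain ⟨γ, hγθ, hgood⟩ := exists_good kappa f h0
  obtain ⟨G', hGinj, hGpair⟩ := exists_chain kappa f h0 hgood
  -- the region below γ
  set Iioγ : Set (TT kappa) := {c | tin kappa c < γ} with hIioγ
  have hIioγ_le : #Iioγ ≤ Order.succ kappa := by
    have hinj : Function.Injective (fun c : Iioγ =>
        (Ordinal.ToType.mk (o := γ)) ⟨tin kappa c.1, c.2⟩) := by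
      intro x y h
      have h1 := ((Ordinal.ToType.mk (o := γ))).injective h
      have h2 : tin kappa x.1 = tin kappa y.1 := congrArg (fun z : Set.Iio γ => z.1) h1
      exact Subtype.ext (tin_inj kappa h2)
    calc #Iioγ ≤ #γ.ToType := mk_le_of_injective hinj
      _ = γ.card := mk_toType γ
      _ ≤ Order.succ kappa := Order.le_of_lt_succ (Cardinal.lt_ord.1 hγθ)
  -- first pigeonhole: the root
  set Z₁ := { t : Set (TT kappa) // t ⊆ Iioγ ∧ #t ≤ kappa } with hZ₁
  have hZ₁lt : #Z₁ < Lam kappa := by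
    have h1 : #Z₁ ≤ max #Iioγ ℵ₀ ^ kappa := mk_bounded_subset_le _ _
    have h2 : max #Iioγ ℵ₀ ≤ Order.succ kappa :=
      max_le hIioγ_le (h0.le.trans (Order.le_succ _))
    calc #Z₁ ≤ max #Iioγ ℵ₀ ^ kappa := h1
      _ ≤ (Order.succ kappa) ^ kappa := power_le_power_right h2
      _ = Order.succ kappa := succ_pow kappa h0 hch
      _ < Lam kappa := Order.lt_succ _
  set t1 : TT kappa → Z₁ := fun t =>
    ⟨S kappa f (G' t) ∩ Iioγ, Set.inter_subset_right,
      (mk_le_mk_of_subset Set.inter_subset_left).trans (S_le kappa f h0 (G' t))⟩ with ht1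
  obtain ⟨R, hR⟩ := exists_big_fiber (Lam_reg kappa h0) (mk_T kappa).symm.le hZ₁lt t1
  set B₁ : Set (TT kappa) := {t | t1 t = R} with hB₁
  -- second pigeonhole: the trace on the root
  set Z₂ := (KK kappa → KK kappa × R.1 → Option (KK kappa)) with hZ₂
  have hZ₂lt : #Z₂ < Lam kappa := by
    have hOpt : #(Option (KK kappa)) = kappa := by
      rw [Cardinal.mk_option, mk_K, Cardinal.add_one_eq h0.le]
    have hprod : #(KK kappa × R.1) ≤ kappa := by
      rw [Cardinal.mk_prod, Cardinal.lift_id, Cardinal.lift_id, mk_K]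
      calc kappa * #R.1 ≤ kappa * kappa :=
            mul_le_mul_right (R.2.2.trans_eq rfl) _
        _ = kappa := mul_eq_self h0.le
    have hX : #(KK kappa × R.1 → Option (KK kappa)) ≤ Order.succ kappa := by
      rw [← Cardinal.power_def]
      calc #(Option (KK kappa)) ^ #(KK kappa × R.1)
          ≤ #(Option (KK kappa)) ^ kappa := by
            refine Cardinal.power_le_power_left ?_ hprod
            rw [hOpt]; exact (aleph0_pos.trans h0).ne'
        _ = kappa ^ kappa := by rw [hOpt]
        _ = 2 ^ kappa := power_self_eq h0.le
        _ = Order.succ kappa := hch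
    have : #Z₂ ≤ (Order.succ kappa) ^ kappa := by
      have hz : #Z₂ = #(KK kappa × R.1 → Option (KK kappa)) ^ #(KK kappa) :=
        (Cardinal.power_def _ _).symm
      rw [hz, mk_K]
      exact Cardinal.power_le_power_right hX
    calc #Z₂ ≤ (Order.succ kappa) ^ kappa := this
      _ = Order.succ kappa := succ_pow kappa h0 hch
      _ < Lam kappa := Order.lt_succ _
  set t2 : B₁ → Z₂ := fun b => fun β p => (f (G' b.1) β).1 (p.1, p.2.1) with ht2
  obtain ⟨τ, hτ⟩ := exists_big_fiber (Lam_reg kappa h0) hR hZ₂lt t2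
  -- the final set
  refine ⟨G' '' (Subtype.val '' {b : B₁ | t2 b = τ}), ?_, ?_⟩
  · apply le_antisymm
    · exact (mk_set_le _).trans_eq (mk_T kappa)
    · calc Lam kappa ≤ #{b : B₁ | t2 b = τ} := hτ
        _ = #(Subtype.val '' {b : B₁ | t2 b = τ}) := (mk_image_eq Subtype.val_injective).symm
        _ = #(G' '' (Subtype.val '' {b : B₁ | t2 b = τ})) := (mk_image_eq hGinj).symm
  · rintro α₁ ⟨t₁, ⟨b₁, hb₁, rfl⟩, rfl⟩ α₂ ⟨t₂, ⟨b₂, hb₂, rfl⟩, rfl⟩ β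
    rintro ⟨ξ, c⟩ hx₁ hx₂
    by_cases hbb : (b₁ : TT kappa) = (b₂ : TT kappa)
    · rw [hbb]
    · have hc₁ : c ∈ S kappa f (G' b₁.1) := ⟨β, ξ, hx₁⟩
      have hc₂ : c ∈ S kappa f (G' b₂.1) := ⟨β, ξ, hx₂⟩
      have hcγ : tin kappa c < γ := hGpair _ _ hbb c hc₁ hc₂
      have hcR : c ∈ R.1 := by
        have h1 : (t1 b₁.1).1 = R.1 := congrArg Subtype.val b₁.2
        rw [← h1]
        exact ⟨hc₁, hcγ⟩
      have e₁ : (f (G' b₁.1) β).1 (ξ, c) = τ β (ξ, ⟨c, hcR⟩) := by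
        rw [← hb₁]
      have e₂ : (f (G' b₂.1) β).1 (ξ, c) = τ β (ξ, ⟨c, hcR⟩) := by
        rw [← hb₂]
      rw [e₁, e₂]
end
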